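/- Let K ≥ 2 and N ≥ 2, and define the memory-sharing line between (μ, D) points (1/N, K) and (1, ∑_{i=0}^{K-1} N^{-i}): for μ = t/N with 1 < t < N, the memory-sharing download cost is ((1 - t/N)/(1 - 1/N))·K + ((t/N - 1/N)/(1 - 1/N))·∑_{i=0}^{K-1} N^{-i}. Then the scheme's cost ∑_{i=0}^{K-1} t^{-i} is strictly less than this memory-sharing cost for every integer t with 1 < t < N. -/

import Mathlib

/-- Integer convexity core: `(n-1)*n^i ≤ (n-t)*(t*n)^i + (t-1)*t^i`. -/
lemma aux_conv (n t : ℤ) (h1 : 1 ≤ t) (h2 : t ≤ n) :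
    ∀ i : ℕ, (n - 1) * n ^ i ≤ (n - t) * (t * n) ^ i + (t - 1) * t ^ i := by
  intro i
  induction i with
  | zero => simp
  | succ i ih =>
      have htpos : (0:ℤ) ≤ t ^ i := pow_nonneg (by linarith) i
      have hnpow : t ^ i ≤ (t*n) ^ i := pow_le_pow_left₀ (by linarith) (by nlinarith) i
      have h3 : (n - 1) * n ^ (i+1) ≤ ((n - t) * (t * n) ^ i + (t - 1) * t ^ i) * n := by
        have := mul_le_mul_of_nonneg_right ih (by linarith : (0:ℤ) ≤ n)
        calc (n - 1) * n ^ (i+1) = (n - 1) * n ^ i * n := by ring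
          _ ≤ _ := this
      have h4 : ((n - t) * (t * n) ^ i + (t - 1) * t ^ i) * n
          ≤ (n - t) * (t * n) ^ (i+1) + (t - 1) * t ^ (i+1) := by
        have hle : t ^ i ≤ n * (t*n) ^ i := by nlinarith [hnpow]
        have diff : (0:ℤ) ≤ (t - 1) * ((n - t) * (n * (t*n) ^ i - t ^ i)) :=
          mul_nonneg (by linarith) (mul_nonneg (by linarith) (by linarith))
        rw [pow_succ, pow_succ]
        nlinarith [diff]
      linarith

/-- The scheme strictly outperforms memory sharing between `(1/N, K)` and
`(1, ∑_{i<K} N^{-i})` at every intermediate integer point `μ = t/N`, `1 < t < N`. -/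
theorem stmt_9 (N K t : ℕ) (hK : 2 ≤ K) (hN : 2 ≤ N) (ht1 : 1 < t) (htN : t < N) :
    ∑ i ∈ Finset.range K, ((t : ℚ))⁻¹ ^ i
      < ((1 - (t : ℚ) / N) / (1 - 1 / (N : ℚ))) * K
        + (((t : ℚ) / N - 1 / (N : ℚ)) / (1 - 1 / (N : ℚ)))
          * ∑ i ∈ Finset.range K, ((N : ℚ))⁻¹ ^ i := by
  have hNQ : (2:ℚ) ≤ N := by exact_mod_cast hN
  have htQ : (1:ℚ) < t := by exact_mod_cast ht1
  have htNQ : (t:ℚ) < N := by exact_mod_cast htN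
  have hN0 : (0:ℚ) < N := by linarith
  have ht0 : (0:ℚ) < t := by linarith
  have hN1 : (0:ℚ) < (N:ℚ) - 1 := by linarith
  have h1N : (0:ℚ) < 1 - 1 / (N:ℚ) := by
    rw [sub_pos, div_lt_one hN0]; linarith
  -- rewrite the coefficients
  have hc1 : ((1 - (t : ℚ) / N) / (1 - 1 / (N : ℚ))) = ((N:ℚ) - t) / ((N:ℚ) - 1) := by
    rw [div_eq_div_iff h1N.ne' (by linarith)]
    field_simp
  have hc2 : (((t : ℚ) / N - 1 / (N : ℚ)) / (1 - 1 / (N : ℚ))) = ((t:ℚ) - 1) / ((N:ℚ) - 1) := by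
    rw [div_eq_div_iff h1N.ne' (by linarith)]
    field_simp
  rw [hc1, hc2]
  rw [div_mul_eq_mul_div, div_mul_eq_mul_div, ← add_div, lt_div_iff₀ hN1]
  -- termwise inequality
  have key : ∀ i : ℕ, ((N:ℚ) - 1) * ((t : ℚ))⁻¹ ^ i ≤ ((N:ℚ) - t) + ((t:ℚ) - 1) * ((N:ℚ))⁻¹ ^ i := by
    intro i
    have hint := aux_conv (N:ℤ) (t:ℤ) (by exact_mod_cast ht1.le) (by exact_mod_cast htN.le) i
    have hq : ((N:ℚ) - 1) * (N:ℚ) ^ i ≤ ((N:ℚ) - t) * ((t:ℚ) * N) ^ i + ((t:ℚ) - 1) * (t:ℚ) ^ i := by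
      exact_mod_cast hint
    have htp : (0:ℚ) < (t:ℚ) ^ i := by positivity
    have hnp : (0:ℚ) < (N:ℚ) ^ i := by positivity
    rw [inv_pow, inv_pow, ← sub_nonneg]
    have expand : ((N:ℚ) - t) + ((t:ℚ) - 1) * ((N:ℚ) ^ i)⁻¹ - ((N:ℚ) - 1) * ((t:ℚ) ^ i)⁻¹
        = (((N:ℚ) - t) * ((t:ℚ) * N) ^ i + ((t:ℚ) - 1) * (t:ℚ) ^ i - ((N:ℚ) - 1) * (N:ℚ) ^ i)
          / ((t:ℚ) ^ i * (N:ℚ) ^ i) := by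
      field_simp
      ring
    rw [expand]
    apply div_nonneg (by linarith) (by positivity)
  -- strictness at i = 1
  have key1 : ((N:ℚ) - 1) * ((t : ℚ))⁻¹ ^ 1 < ((N:ℚ) - t) + ((t:ℚ) - 1) * ((N:ℚ))⁻¹ ^ 1 := by
    rw [pow_one, pow_one, ← sub_pos]
    have expand : ((N:ℚ) - t) + ((t:ℚ) - 1) * ((N:ℚ))⁻¹ - ((N:ℚ) - 1) * ((t:ℚ))⁻¹
        = (((N:ℚ) - t) * ((t:ℚ) - 1) * ((N:ℚ) - 1)) / ((t:ℚ) * N) := by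
      field_simp
      ring
    rw [expand]
    exact div_pos (mul_pos (mul_pos (by linarith) (by linarith)) hN1) (by positivity)
  have hsum : ∑ i ∈ Finset.range K, ((N:ℚ) - 1) * ((t : ℚ))⁻¹ ^ i
      < ∑ i ∈ Finset.range K, (((N:ℚ) - t) + ((t:ℚ) - 1) * ((N:ℚ))⁻¹ ^ i) := by
    apply Finset.sum_lt_sum (fun i _ => key i)
    exact ⟨1, Finset.mem_range.mpr (by omega), key1⟩
  calc (∑ i ∈ Finset.range K, ((t : ℚ))⁻¹ ^ i) * ((N:ℚ) - 1)
      = ∑ i ∈ Finset.range K, ((N:ℚ) - 1) * ((t : ℚ))⁻¹ ^ i := by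
        rw [Finset.sum_mul]; exact Finset.sum_congr rfl (fun i _ => by ring)
    _ < ∑ i ∈ Finset.range K, (((N:ℚ) - t) + ((t:ℚ) - 1) * ((N:ℚ))⁻¹ ^ i) := hsum
    _ = ((N:ℚ) - t) * K + ((t:ℚ) - 1) * ∑ i ∈ Finset.range K, ((N : ℚ))⁻¹ ^ i := by
        rw [Finset.sum_add_distrib, Finset.sum_const, Finset.card_range, ← Finset.mul_sum]
        ring
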